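/- Let C and D be split chain complexes and let f : C → D be a chain map. Then f is a chain homotopy equivalence if and only if both restrictions f|_{C^ℓ} : C^ℓ → D^ℓ and f|_{C^u} : C^u → D^u are chain homotopy equivalences. -/

import Mathlib

open CategoryTheory Limits

variable {R : Type} [Ring R]

/-- Admissibility: bounded between 0 and n, finitely generated free in each degree. -/
def IsAdmissible (n : ℕ) (C : ChainComplex (ModuleCat R) ℕ) : Prop :=
  (∀ i, n < i → IsZero (C.X i)) ∧
    (∀ i, Module.Finite R (C.X i)) ∧ (∀ i, Module.Free R (C.X i))

/-- The lower half `C^ℓ` of a chain complex. -/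
noncomputable def lowerHalf (n : ℕ) (C : ChainComplex (ModuleCat R) ℕ) :
    ChainComplex (ModuleCat R) ℕ :=
  ChainComplex.of
    (fun i => if 2 * i < n then C.X i else ModuleCat.of R PUnit)
    (fun i =>
      if h : 2 * (i + 1) < n then
        eqToHom (if_pos h) ≫ C.d (i + 1) i ≫ eqToHom (if_pos (by omega : 2 * i < n)).symm
      else 0)
    (fun i => by
      by_cases h : 2 * (i + 1 + 1) < n
      · simp only [dif_pos h, dif_pos (show 2 * (i + 1) < n by omega)]
        simp
      · simp only [dif_neg h, zero_comp])

/-- The upper half `C^u` of a chain complex. -/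
noncomputable def upperHalf (n : ℕ) (C : ChainComplex (ModuleCat R) ℕ) :
    ChainComplex (ModuleCat R) ℕ :=
  ChainComplex.of
    (fun i => if n < 2 * i then C.X i else ModuleCat.of R PUnit)
    (fun i =>
      if h : n < 2 * i then
        eqToHom (if_pos (by omega : n < 2 * (i + 1))) ≫ C.d (i + 1) i ≫ eqToHom (if_pos h).symm
      else 0)
    (fun i => by
      by_cases h : n < 2 * i
      · simp only [dif_pos h, dif_pos (show n < 2 * (i + 1) by omega)]
        simp
      · simp only [dif_neg h, comp_zero])

/-- A chain complex splits if `C_{n/2} = 0` (n even) or `d_{⌈n/2⌉} = 0` (n odd). -/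
def Splits (n : ℕ) (C : ChainComplex (ModuleCat R) ℕ) : Prop :=
  if Even n then IsZero (C.X (n / 2)) else C.d (n / 2 + 1) (n / 2) = 0

/-- The restriction of a chain map to the lower halves. -/
noncomputable def lowerMap (n : ℕ) {C D : ChainComplex (ModuleCat R) ℕ} (f : C ⟶ D) :
    lowerHalf n C ⟶ lowerHalf n D where
  f i :=
    if h : 2 * i < n then
      eqToHom (if_pos h) ≫ f.f i ≫ eqToHom (if_pos h).symm
    else 0
  comm' := by
    rintro i j (rfl : j + 1 = i)
    show _ ≫ (lowerHalf n D).d (j + 1) j = (lowerHalf n C).d (j + 1) j ≫ _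
    simp only [lowerHalf, ChainComplex.of_d]
    by_cases h : 2 * (j + 1) < n
    · simp only [dif_pos h, dif_pos (show 2 * j < n by omega)]
      simp [h, (show 2 * j < n by omega)]
    · simp only [dif_neg h, zero_comp, comp_zero]

/-- The restriction of a chain map to the upper halves. -/
noncomputable def upperMap (n : ℕ) {C D : ChainComplex (ModuleCat R) ℕ} (f : C ⟶ D) :
    upperHalf n C ⟶ upperHalf n D where
  f i :=
    if h : n < 2 * i then
      eqToHom (if_pos h) ≫ f.f i ≫ eqToHom (if_pos h).symm
    else 0
  comm' := by
    rintro i j (rfl : j + 1 = i)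
    show _ ≫ (upperHalf n D).d (j + 1) j = (upperHalf n C).d (j + 1) j ≫ _
    simp only [upperHalf, ChainComplex.of_d]
    by_cases h : n < 2 * j
    · simp only [dif_pos h, dif_pos (show n < 2 * (j + 1) by omega)]
      simp [h, (show n < 2 * (j + 1) by omega)]
    · simp only [dif_neg h, zero_comp, comp_zero]

/-- A chain map is a chain homotopy equivalence if it is the underlying map of a homotopy
equivalence, i.e. it admits a chain-homotopy inverse. -/
def IsChainHtpyEquiv {C D : ChainComplex (ModuleCat R) ℕ} (f : C ⟶ D) : Prop :=
  ∃ e : HomotopyEquiv C D, e.hom = f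

/-!
For split complexes the only differential crossing degree `n / 2` vanishes, so the inclusions and
projections of both halves are chain maps. They exhibit `f|_{C^ℓ}` and `f|_{C^u}` as retracts of
`f` in the arrow category whose two idempotents sum to the identity. A retract of a homotopy
equivalence is again one; conversely, the sum of the homotopy inverses of the two restrictions,
conjugated by these inclusions and projections, is a homotopy inverse of `f`.
-/

namespace HomotopyEquiv

variable {ι V : Type*} [Category V] [Preadditive V] {c : ComplexShape ι}
  {C D C' D' : HomologicalComplex V c}

def ofRetractArrow {g : C' ⟶ D'} (e : HomotopyEquiv C D) (h : RetractArrow g e.hom) :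
    HomotopyEquiv C' D' where
  hom := g
  inv := h.i.right ≫ e.inv ≫ h.r.left
  homotopyHomInvId :=
    (Homotopy.ofEq (by simp only [Category.assoc]; exact (h.i_w_assoc _).symm)).trans
      (((e.homotopyHomInvId.compRight h.r.left).compLeft h.i.left).trans
        (Homotopy.ofEq (by simp)))
  homotopyInvHomId :=
    (Homotopy.ofEq (by simp only [Category.assoc, h.r_w])).trans
      (((e.homotopyInvHomId.compRight h.r.right).compLeft h.i.right).trans
        (Homotopy.ofEq (by simp)))

theorem exists_of_complementary_retractArrows {C₁ D₁ C₂ D₂ : HomologicalComplex V c}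
    {f : C ⟶ D} {g₁ : C₁ ⟶ D₁} {g₂ : C₂ ⟶ D₂} (h₁ : RetractArrow g₁ f) (h₂ : RetractArrow g₂ f)
    (hC : h₁.r.left ≫ h₁.i.left + h₂.r.left ≫ h₂.i.left = 𝟙 C)
    (hD : h₁.r.right ≫ h₁.i.right + h₂.r.right ≫ h₂.i.right = 𝟙 D)
    (hg₁ : ∃ e : HomotopyEquiv C₁ D₁, e.hom = g₁) (hg₂ : ∃ e : HomotopyEquiv C₂ D₂, e.hom = g₂) :
    ∃ e : HomotopyEquiv C D, e.hom = f := by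
  obtain ⟨e₁, rfl⟩ := hg₁
  obtain ⟨e₂, rfl⟩ := hg₂
  have r₁ : h₁.r.left ≫ e₁.hom = f ≫ h₁.r.right := h₁.r_w
  have r₂ : h₂.r.left ≫ e₂.hom = f ≫ h₂.r.right := h₂.r_w
  have i₁ : h₁.i.left ≫ f = e₁.hom ≫ h₁.i.right := h₁.i_w
  have i₂ : h₂.i.left ≫ f = e₂.hom ≫ h₂.i.right := h₂.i_w
  refine ⟨{
    hom := f
    inv := h₁.r.right ≫ e₁.inv ≫ h₁.i.left + h₂.r.right ≫ e₂.inv ≫ h₂.i.left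
    homotopyHomInvId :=
      (Homotopy.ofEq ?_).trans
        ((((e₁.homotopyHomInvId.compRight h₁.i.left).compLeft h₁.r.left).add
          ((e₂.homotopyHomInvId.compRight h₂.i.left).compLeft h₂.r.left)).trans
            (Homotopy.ofEq (by simpa using hC)))
    homotopyInvHomId :=
      (Homotopy.ofEq ?_).trans
        ((((e₁.homotopyInvHomId.compRight h₁.i.right).compLeft h₁.r.right).add
          ((e₂.homotopyInvHomId.compRight h₂.i.right).compLeft h₂.r.right)).trans
            (Homotopy.ofEq (by simpa using hD))) }, rfl⟩
  · simp only [Preadditive.comp_add, Category.assoc, reassoc_of% r₁, reassoc_of% r₂]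
  · simp only [Preadditive.add_comp, Category.assoc, i₁, i₂]

end HomotopyEquiv

section Halves

variable {n : ℕ} {C D : ChainComplex (ModuleCat R) ℕ}

lemma Splits.isZero_X (hC : Splits n C) {i : ℕ} (h : n = 2 * i) : IsZero (C.X i) := by
  have hev : Even n := ⟨i, by omega⟩
  have hi : n / 2 = i := by omega
  simpa only [Splits, if_pos hev, hi] using hC

lemma Splits.d_eq_zero (hC : Splits n C) {j : ℕ} (h₁ : 2 * j ≤ n) (h₂ : n ≤ 2 * j + 2) :
    C.d (j + 1) j = 0 := by
  obtain h | h | h : n = 2 * j ∨ n = 2 * j + 1 ∨ n = 2 * (j + 1) := by omega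
  · exact (hC.isZero_X h).eq_of_tgt _ _
  · have hodd : ¬ Even n := Nat.not_even_iff_odd.mpr ⟨j, h⟩
    obtain rfl : j = n / 2 := by omega
    simpa only [Splits, if_neg hodd] using hC
  · exact (hC.isZero_X h).eq_of_src _ _

lemma lowerHalf_X_isZero {i : ℕ} (h : n ≤ 2 * i) : IsZero ((lowerHalf n C).X i) :=
  (ModuleCat.isZero_of_subsingleton (ModuleCat.of R PUnit)).of_iso
    (eqToIso (if_neg (by omega) : (if 2 * i < n then C.X i else ModuleCat.of R PUnit) = _))

lemma upperHalf_X_isZero {i : ℕ} (h : 2 * i ≤ n) : IsZero ((upperHalf n C).X i) :=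
  (ModuleCat.isZero_of_subsingleton (ModuleCat.of R PUnit)).of_iso
    (eqToIso (if_neg (by omega) : (if n < 2 * i then C.X i else ModuleCat.of R PUnit) = _))

variable (n C)

noncomputable def lowerIncl : lowerHalf n C ⟶ C where
  f i := if h : 2 * i < n then eqToHom (if_pos h) else 0
  comm' := by
    rintro _ j rfl
    by_cases h : 2 * (j + 1) < n
    · simp [lowerHalf, h, show 2 * j < n by omega]
    · exact (lowerHalf_X_isZero (by omega)).eq_of_src _ _

noncomputable def upperProj : C ⟶ upperHalf n C where
  f i := if h : n < 2 * i then eqToHom (if_pos h).symm else 0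
  comm' := by
    rintro _ j rfl
    by_cases h : n < 2 * j
    · simp [upperHalf, h, show n < 2 * (j + 1) by omega]
    · exact (upperHalf_X_isZero (by omega)).eq_of_tgt _ _

noncomputable def lowerProj (hC : Splits n C) : C ⟶ lowerHalf n C where
  f i := if h : 2 * i < n then eqToHom (if_pos h).symm else 0
  comm' := by
    rintro _ j rfl
    by_cases h : 2 * (j + 1) < n
    · simp [lowerHalf, h, show 2 * j < n by omega]
    by_cases h' : 2 * j < n
    · rw [hC.d_eq_zero (by omega) (by omega), zero_comp,
        (lowerHalf_X_isZero (by omega)).eq_of_src ((lowerHalf n C).d (j + 1) j) 0, comp_zero]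
    · exact (lowerHalf_X_isZero (by omega)).eq_of_tgt _ _

noncomputable def upperIncl (hC : Splits n C) : upperHalf n C ⟶ C where
  f i := if h : n < 2 * i then eqToHom (if_pos h) else 0
  comm' := by
    rintro _ j rfl
    by_cases h : n < 2 * j
    · simp [upperHalf, h, show n < 2 * (j + 1) by omega]
    by_cases h' : n < 2 * (j + 1)
    · rw [hC.d_eq_zero (by omega) (by omega), comp_zero,
        (upperHalf_X_isZero (by omega)).eq_of_tgt ((upperHalf n C).d (j + 1) j) 0, zero_comp]
    · exact (upperHalf_X_isZero (by omega)).eq_of_src _ _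

variable {C}

lemma lowerIncl_naturality (f : C ⟶ D) :
    lowerIncl n C ≫ f = lowerMap n f ≫ lowerIncl n D := by
  ext i : 1
  by_cases h : 2 * i < n
  · simp [lowerIncl, lowerMap, lowerHalf, h]
  · exact (lowerHalf_X_isZero (by omega)).eq_of_src _ _

lemma upperProj_naturality (f : C ⟶ D) :
    upperProj n C ≫ upperMap n f = f ≫ upperProj n D := by
  ext i : 1
  by_cases h : n < 2 * i
  · simp [upperProj, upperMap, upperHalf, h]
  · exact (upperHalf_X_isZero (by omega)).eq_of_tgt _ _

lemma lowerProj_naturality (hC : Splits n C) (hD : Splits n D) (f : C ⟶ D) :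
    lowerProj n C hC ≫ lowerMap n f = f ≫ lowerProj n D hD := by
  ext i : 1
  by_cases h : 2 * i < n
  · simp [lowerProj, lowerMap, lowerHalf, h]
  · exact (lowerHalf_X_isZero (by omega)).eq_of_tgt _ _

lemma upperIncl_naturality (hC : Splits n C) (hD : Splits n D) (f : C ⟶ D) :
    upperIncl n C hC ≫ f = upperMap n f ≫ upperIncl n D hD := by
  ext i : 1
  by_cases h : n < 2 * i
  · simp [upperIncl, upperMap, upperHalf, h]
  · exact (upperHalf_X_isZero (by omega)).eq_of_src _ _

lemma lowerIncl_lowerProj (hC : Splits n C) : lowerIncl n C ≫ lowerProj n C hC = 𝟙 _ := by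
  ext i : 1
  by_cases h : 2 * i < n
  · simp [lowerIncl, lowerProj, lowerHalf, h]
  · exact (lowerHalf_X_isZero (by omega)).eq_of_src _ _

lemma upperIncl_upperProj (hC : Splits n C) : upperIncl n C hC ≫ upperProj n C = 𝟙 _ := by
  ext i : 1
  by_cases h : n < 2 * i
  · simp [upperIncl, upperProj, upperHalf, h]
  · exact (upperHalf_X_isZero (by omega)).eq_of_src _ _

lemma lowerProj_lowerIncl_add_upperProj_upperIncl (hC : Splits n C) :
    lowerProj n C hC ≫ lowerIncl n C + upperProj n C ≫ upperIncl n C hC = 𝟙 C := by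
  ext i : 1
  obtain h | h | h := lt_trichotomy (2 * i) n
  · simp [lowerProj, lowerIncl, upperProj, upperIncl, lowerHalf, h, h.not_gt]
  · exact (hC.isZero_X h.symm).eq_of_src _ _
  · simp [lowerProj, lowerIncl, upperProj, upperIncl, upperHalf, h, h.not_gt]

noncomputable def lowerRetractArrow (hC : Splits n C) (hD : Splits n D) (f : C ⟶ D) :
    RetractArrow (lowerMap n f) f where
  i := Arrow.homMk' (lowerIncl n C) (lowerIncl n D) (lowerIncl_naturality n f)
  r := Arrow.homMk' (lowerProj n C hC) (lowerProj n D hD) (lowerProj_naturality n hC hD f)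
  retract := by ext <;> simp [lowerIncl_lowerProj]

noncomputable def upperRetractArrow (hC : Splits n C) (hD : Splits n D) (f : C ⟶ D) :
    RetractArrow (upperMap n f) f where
  i := Arrow.homMk' (upperIncl n C hC) (upperIncl n D hD) (upperIncl_naturality n hC hD f)
  r := Arrow.homMk' (upperProj n C) (upperProj n D) (upperProj_naturality n f)
  retract := by ext <;> simp [upperIncl_upperProj]

end Halves

theorem split_chainMap_homotopyEquiv_iff_general (n : ℕ)
    (C D : ChainComplex (ModuleCat R) ℕ)
    (hC : Splits n C) (hD : Splits n D) (f : C ⟶ D) :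
    IsChainHtpyEquiv f ↔
      IsChainHtpyEquiv (lowerMap n f) ∧ IsChainHtpyEquiv (upperMap n f) := by
  constructor
  · rintro ⟨e, rfl⟩
    exact ⟨⟨e.ofRetractArrow (lowerRetractArrow n hC hD e.hom), rfl⟩,
      ⟨e.ofRetractArrow (upperRetractArrow n hC hD e.hom), rfl⟩⟩
  · rintro ⟨hlower, hupper⟩
    exact HomotopyEquiv.exists_of_complementary_retractArrows
      (lowerRetractArrow n hC hD f) (upperRetractArrow n hC hD f)
      (lowerProj_lowerIncl_add_upperProj_upperIncl n hC)
      (lowerProj_lowerIncl_add_upperProj_upperIncl n hD) hlower hupper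

/-- For split chain complexes `C` and `D`, a chain map `f : C ⟶ D` is a chain
homotopy equivalence if and only if both of its restrictions to the lower and upper halves are
chain homotopy equivalences. -/
theorem split_chainMap_homotopyEquiv_iff (n : ℕ) (hn : 0 < n)
    (C D : ChainComplex (ModuleCat R) ℕ)
    (hCa : IsAdmissible n C) (hDa : IsAdmissible n D)
    (hC : Splits n C) (hD : Splits n D) (f : C ⟶ D) :
    IsChainHtpyEquiv f ↔
      IsChainHtpyEquiv (lowerMap n f) ∧ IsChainHtpyEquiv (upperMap n f) :=
  split_chainMap_homotopyEquiv_iff_general n C D hC hD f
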